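/- Timeline invariant, part 1: for any combined-machine configuration reachable from an initial configuration (u, halt_∅, ∅, ∅, ∅)_u, if the configuration has empty future and its soup is (n', K'_{P'})::s where the current continuation carries history P, then P' = next(P). -/

import Mathlib

/-- Terms: variables, numerals, successor, let-bindings, and binary choice. -/
inductive Tm : Type
  | var : String → Tm
  | num : ℕ → Tm
  | suc : Tm → Tm
  | lett : String → Tm → Tm → Tm
  | choose : Tm → Tm → Tm
deriving DecidableEq

/-- Substitution of a numeral for a variable. -/
def Tm.subst (x : String) (n : ℕ) : Tm → Tm
  | .var y => if y = x then .num n else .var y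
  | .num m => .num m
  | .suc t => .suc (t.subst x n)
  | .lett y t u => .lett y (t.subst x n) (if y = x then u else u.subst x n)
  | .choose a b => .choose (a.subst x n) (b.subst x n)

/-- Machine continuations: halt, successor frame, and let frame. -/
inductive Kont : Type
  | halt : Kont
  | suc : Kont → Kont
  | lett : String → Tm → Kont → Kont
deriving DecidableEq

/-- A choice `i ∈ {1, 2}` is encoded as a `Bool`: `false` is choice 1, `true` is choice 2.
A history is a list of choices; `P·i` is `P ++ [i]`. -/
abbrev Hist : Type := List Bool

/-- Successor on reversed histories: `next(P·1) = P·2`, `next(P·2) = next(P)`. -/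
def nextRev : List Bool → Option (List Bool)
  | [] => none
  | false :: P => some (true :: P)
  | true :: P => nextRev P

/-- The successor function `next` on histories (`none` when undefined). -/
def nextHist (P : Hist) : Option Hist := (nextRev P.reverse).map List.reverse

/-- Combined-machine configurations `(t, K_P, F, s, R)_u`: the current continuation
carries a past history `P`, each soup entry carries its own past history, and the
machine holds a future `F`. -/
structure MCfg : Type where
  tm : Tm
  k : Kont
  past : Hist
  fut : Hist
  soup : List (ℕ × Kont × Hist)
  res : List ℕ
deriving DecidableEq

/-- The reduction relation of the combined machine, for a fixed initial term `u`. -/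
inductive MStep (u : Tm) : MCfg → MCfg → Prop
  | suc (t K P F s R) : MStep u ⟨.suc t, K, P, F, s, R⟩ ⟨t, .suc K, P, F, s, R⟩
  | sucNum (n K P F s R) : MStep u ⟨.num n, .suc K, P, F, s, R⟩ ⟨.num (n + 1), K, P, F, s, R⟩
  | lett (x t t' K P F s R) :
      MStep u ⟨.lett x t t', K, P, F, s, R⟩ ⟨t, .lett x t' K, P, F, s, R⟩
  | lettNum (n x t' K P F s R) :
      MStep u ⟨.num n, .lett x t' K, P, F, s, R⟩ ⟨t'.subst x n, K, P, F, s, R⟩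
  | chooseFork (n₁ n₂ K P s R) :
      MStep u ⟨.choose (.num n₁) (.num n₂), K, P, [], s, R⟩
              ⟨.num n₁, K, P ++ [false], [], (n₂, K, P ++ [true]) :: s, R⟩
  | haltPop (n n' K' P P' s R) :
      MStep u ⟨.num n, .halt, P, [], (n', K', P') :: s, R⟩
              ⟨.num n', K', P', [], s, n :: R⟩
  | chooseFut (n₁ n₂ K P i F s R) :
      MStep u ⟨.choose (.num n₁) (.num n₂), K, P, i :: F, s, R⟩
              ⟨.num (if i then n₂ else n₁), K, P ++ [i], F, s, R⟩

/-- Pure reductions: the subset of combined-machine reductions that do not depend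
on the soup or result components (the four successor/let rules, plus the
future-consuming choose rule). -/
inductive PureStep (u : Tm) : MCfg → MCfg → Prop
  | suc (t K P F s R) : PureStep u ⟨.suc t, K, P, F, s, R⟩ ⟨t, .suc K, P, F, s, R⟩
  | sucNum (n K P F s R) :
      PureStep u ⟨.num n, .suc K, P, F, s, R⟩ ⟨.num (n + 1), K, P, F, s, R⟩
  | lett (x t t' K P F s R) :
      PureStep u ⟨.lett x t t', K, P, F, s, R⟩ ⟨t, .lett x t' K, P, F, s, R⟩
  | lettNum (n x t' K P F s R) :
      PureStep u ⟨.num n, .lett x t' K, P, F, s, R⟩ ⟨t'.subst x n, K, P, F, s, R⟩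
  | chooseFut (n₁ n₂ K P i F s R) :
      PureStep u ⟨.choose (.num n₁) (.num n₂), K, P, i :: F, s, R⟩
              ⟨.num (if i then n₂ else n₁), K, P ++ [i], F, s, R⟩

/-- The initial combined configuration `(u, halt_∅, ∅, ∅, ∅)_u`. -/
def initMCfg (u : Tm) : MCfg := ⟨u, .halt, [], [], [], []⟩

/-- Reachability of a combined configuration from the initial configuration. -/
def MReachable (u : Tm) (c : MCfg) : Prop :=
  Relation.ReflTransGen (MStep u) (initMCfg u) c

/-
The histories of the current continuation and of the soup entries, read top down, always form a
chain under `next`: a fork replaces the head `P` by `P·1, P·2`, with `next(P·1) = P·2` and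
`next(P·2) = next(P)`, and a pop removes the head. The future stays empty, since no rule fills it.
-/

def IsTimeline (c : MCfg) : Prop :=
  (c.past :: c.soup.map fun e => e.2.2).IsChain fun P Q => nextHist P = some Q

lemma nextHist_append_false (P : Hist) : nextHist (P ++ [false]) = some (P ++ [true]) := by
  simp [nextHist, nextRev]

lemma nextHist_append_true (P : Hist) : nextHist (P ++ [true]) = nextHist P := by
  simp [nextHist, nextRev]

lemma MReachable.fut_eq_nil {u : Tm} {c : MCfg} (hc : MReachable u c) : c.fut = [] := by
  induction hc with
  | refl => rfl
  | tail _ step ih => cases step <;> simp_all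

lemma MStep.isTimeline {u : Tm} {c d : MCfg} (step : MStep u c d) (hF : c.fut = [])
    (hc : IsTimeline c) : IsTimeline d := by
  cases step with
  | chooseFork n₁ n₂ K P s R =>
    cases s with
    | nil => simp [IsTimeline, nextHist_append_false]
    | cons e s =>
      simp only [IsTimeline, List.map_cons, List.isChain_cons_cons] at hc ⊢
      exact ⟨nextHist_append_false P, by rw [nextHist_append_true]; exact hc.1, hc.2⟩
  | haltPop => exact List.IsChain.tail hc
  | chooseFut => simp at hF
  | _ => exact hc

lemma MReachable.isTimeline {u : Tm} {c : MCfg} (hc : MReachable u c) : IsTimeline c := by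
  induction hc with
  | refl => simp [IsTimeline, initMCfg]
  | tail reach step ih => exact step.isTimeline (MReachable.fut_eq_nil reach) ih

theorem timeline_invariant_part1_general (u : Tm) (c : MCfg) (hc : MReachable u c)
    (n' : ℕ) (K' : Kont) (P' : Hist) (s : List (ℕ × Kont × Hist))
    (hs : c.soup = (n', K', P') :: s) :
    nextHist c.past = some P' := by
  have timeline := hc.isTimeline
  simp only [IsTimeline, hs, List.map_cons, List.isChain_cons_cons] at timeline
  exact timeline.1

/-- Timeline invariant, part 1: in any reachable combined configuration with empty
future, the history at the top of the soup is the successor of the current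
continuation's history. -/
theorem timeline_invariant_part1 (u : Tm) (c : MCfg) (hc : MReachable u c)
    (hF : c.fut = []) (n' : ℕ) (K' : Kont) (P' : Hist) (s : List (ℕ × Kont × Hist))
    (hs : c.soup = (n', K', P') :: s) :
    nextHist c.past = some P' :=
  timeline_invariant_part1_general u c hc n' K' P' s hs
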